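/- arXiv:2205.01788 — 8 statements merged into one kernel-verified Lean document; each statement's English description precedes it below -/
import Mathlib

section
/- Let X be a real normed space and A : X → Set X an accretive set-valued operator. For all γ, γ' > 0 and all x, p, q ∈ X, if γ⁻¹ • (x − p) ∈ A p and γ'⁻¹ • (x − q) ∈ A q, then ‖p − q‖ ≤ |1 − γ/γ'| · ‖x − q‖. In particular, if moreover b ≥ ‖x − q‖, γ' ≥ 2^{−l'} and |γ − γ'| ≤ 2^{−j} with j ≥ k + l' + log₂ b, then ‖p − q‖ ≤ 2^{−k}. -/
/-- Quantitative continuity of the resolvent of an accretive operator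
in the parameter `γ`. -/
theorem resolvent_continuity_in_parameter_of_accretive
    {X : Type*} [NormedAddCommGroup X] [NormedSpace ℝ X]
    (A : X → Set X)
    (hacc : ∀ x y u v : X, u ∈ A x → v ∈ A y → ∀ lam : ℝ, 0 < lam →
      ‖x - y‖ ≤ ‖x - y + lam • (u - v)‖)
    (γ γ' : ℝ) (hγ : 0 < γ) (hγ' : 0 < γ') (x p q : X)
    (hp : γ⁻¹ • (x - p) ∈ A p) (hq : γ'⁻¹ • (x - q) ∈ A q) :
    ‖p - q‖ ≤ |1 - γ / γ'| * ‖x - q‖ ∧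
      ∀ b j k l' : ℝ, ‖x - q‖ ≤ b → (2 : ℝ) ^ (-l') ≤ γ' →
        |γ - γ'| ≤ (2 : ℝ) ^ (-j) → k + l' + Real.logb 2 b ≤ j →
        ‖p - q‖ ≤ (2 : ℝ) ^ (-k) := by
  have hv := hacc p q _ _ hp hq γ hγ
  have halg : p - q + γ • (γ⁻¹ • (x - p) - γ'⁻¹ • (x - q)) = (1 - γ / γ') • (x - q) := by
    rw [div_eq_mul_inv, smul_sub, smul_smul, smul_smul, mul_inv_cancel₀ hγ.ne', one_smul,
      sub_smul, one_smul]
    abel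
  have key : ‖p - q‖ ≤ |1 - γ / γ'| * ‖x - q‖ := by
    calc ‖p - q‖ ≤ ‖p - q + γ • (γ⁻¹ • (x - p) - γ'⁻¹ • (x - q))‖ := hv
    _ = ‖(1 - γ / γ') • (x - q)‖ := by rw [halg]
    _ = |1 - γ / γ'| * ‖x - q‖ := by rw [norm_smul, Real.norm_eq_abs]
  refine ⟨key, fun b j k l' hb hγ'l hjγ hjk => ?_⟩
  have hb0 : 0 ≤ b := le_trans (norm_nonneg _) hb
  have habs : |1 - γ / γ'| = |γ - γ'| / γ' := by
    rw [abs_sub_comm γ γ']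
    rw [show (1 : ℝ) - γ / γ' = (γ' - γ) / γ' by field_simp]
    rw [abs_div, abs_of_pos hγ']
  have hpow : (0 : ℝ) < (2 : ℝ) ^ (-l') := Real.rpow_pos_of_pos (by norm_num) _
  have key2 : ‖p - q‖ ≤ (2 : ℝ) ^ (-j) * (2 : ℝ) ^ l' * b := by
    calc ‖p - q‖ ≤ |1 - γ / γ'| * ‖x - q‖ := key
    _ = |γ - γ'| / γ' * ‖x - q‖ := by rw [habs]
    _ ≤ (2 : ℝ) ^ (-j) / (2 : ℝ) ^ (-l') * b := by
        gcongr
    _ = (2 : ℝ) ^ (-j) * (2 : ℝ) ^ l' * b := by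
        rw [div_eq_mul_inv, ← Real.rpow_neg (by norm_num), neg_neg]
  rcases eq_or_lt_of_le hb0 with hb0' | hb0'
  · have : ‖p - q‖ ≤ 0 := by
      calc ‖p - q‖ ≤ (2 : ℝ) ^ (-j) * (2 : ℝ) ^ l' * b := key2
      _ = 0 := by rw [← hb0']; ring
    exact le_trans this (le_of_lt (Real.rpow_pos_of_pos (by norm_num) _))
  · calc ‖p - q‖ ≤ (2 : ℝ) ^ (-j) * (2 : ℝ) ^ l' * b := key2
    _ = (2 : ℝ) ^ (-j + l' + Real.logb 2 b) := by
        rw [Real.rpow_add (by norm_num), Real.rpow_add (by norm_num),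
          Real.rpow_logb (by norm_num) (by norm_num) hb0']
    _ ≤ (2 : ℝ) ^ (-k) := by
        apply Real.rpow_le_rpow_of_exponent_le (by norm_num)
        linarith
end

section
/- Let X be a real normed space and A : X → Set X an accretive set-valued operator such that ran(Id + γA) = X for some γ > 0 (i.e. for every x ∈ X there exists p with γ⁻¹ • (x − p) ∈ A p). Then A has no proper accretive extension; concretely, for all x, u ∈ X, if ‖x − y + λ•(u − v)‖ ≥ ‖x − y‖ for all (y,v) ∈ gra A and all λ ≥ 0, then u ∈ A x. -/
/-- An accretive operator with `ran(Id + γA) = X` for some `γ > 0`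
has no proper accretive extension (it is maximally accretive). -/
theorem maximal_accretive_of_total_resolvent
    {X : Type*} [NormedAddCommGroup X] [NormedSpace ℝ X]
    (A : X → Set X)
    (hacc : ∀ x y u v : X, u ∈ A x → v ∈ A y → ∀ lam : ℝ, 0 < lam →
      ‖x - y‖ ≤ ‖x - y + lam • (u - v)‖)
    (hran : ∃ γ : ℝ, 0 < γ ∧ ∀ x : X, ∃ p : X, γ⁻¹ • (x - p) ∈ A p) :
    ∀ x u : X,
      (∀ y v : X, v ∈ A y → ∀ lam : ℝ, 0 ≤ lam →
        ‖x - y‖ ≤ ‖x - y + lam • (u - v)‖) → u ∈ A x := by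
  obtain ⟨γ, hγ, hsurj⟩ := hran
  intro x u h
  obtain ⟨p, hp⟩ := hsurj (x + γ • u)
  set v : X := γ⁻¹ • (x + γ • u - p) with hv
  have hγ0 : (γ : ℝ) ≠ 0 := ne_of_gt hγ
  have hγv : γ • v = x + γ • u - p := by
    rw [hv, smul_smul, mul_inv_cancel₀ hγ0, one_smul]
  have hkey := h p v hp γ hγ.le
  have hzero : x - p + γ • (u - v) = 0 := by
    rw [smul_sub, hγv]
    abel
  rw [hzero, norm_zero] at hkey
  have hxp : x = p := by
    have := norm_le_zero_iff.mp hkey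
    exact sub_eq_zero.mp this
  have huv : v = u := by
    rw [hv, ← hxp]
    rw [add_sub_cancel_left, smul_smul, inv_mul_cancel₀ hγ0, one_smul]
  rw [← huv, hxp]
  exact hp
end

section
/- Let X be a real normed space and A : X → Set X an accretive set-valued operator. For all γ, λ > 0 and all x, p, q ∈ X, if λ⁻¹ • (x − p) ∈ A p and γ⁻¹ • (x − q) ∈ A q, then ‖x − q‖ ≤ (2 + γ/λ) · ‖x − p‖ (i.e. ‖x − J^A_γ x‖ ≤ (2 + γ/λ)‖x − J^A_λ x‖). -/
/-- For an accretive operator,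
`‖x − J^A_γ x‖ ≤ (2 + γ/λ)‖x − J^A_λ x‖`. -/
theorem resolvent_displacement_comparison_of_accretive
    {X : Type*} [NormedAddCommGroup X] [NormedSpace ℝ X]
    (A : X → Set X)
    (hacc : ∀ x y u v : X, u ∈ A x → v ∈ A y → ∀ lam : ℝ, 0 < lam →
      ‖x - y‖ ≤ ‖x - y + lam • (u - v)‖)
    (γ lam : ℝ) (hγ : 0 < γ) (hlam : 0 < lam) (x p q : X)
    (hp : lam⁻¹ • (x - p) ∈ A p) (hq : γ⁻¹ • (x - q) ∈ A q) :
    ‖x - q‖ ≤ (2 + γ / lam) * ‖x - p‖ := by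
  have key := hacc p q _ _ hp hq γ hγ
  have hv : p - q + γ • (lam⁻¹ • (x - p) - γ⁻¹ • (x - q)) = (γ / lam - 1) • (x - p) := by
    have h1 : γ • γ⁻¹ • (x - q) = x - q := by
      rw [smul_smul, mul_inv_cancel₀ hγ.ne', one_smul]
    have h2 : γ • lam⁻¹ • (x - p) = (γ / lam) • (x - p) := by
      rw [smul_smul, div_eq_mul_inv]
    rw [smul_sub, h1, h2, sub_smul, one_smul]; abel
  rw [hv, norm_smul] at key
  have habs : |γ / lam - 1| ≤ 1 + γ / lam := by
    have : 0 < γ / lam := div_pos hγ hlam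
    rw [abs_le]; constructor <;> linarith
  have hpq : ‖p - q‖ ≤ (1 + γ / lam) * ‖x - p‖ := by
    calc ‖p - q‖ ≤ ‖(γ / lam - 1 : ℝ)‖ * ‖x - p‖ := key
    _ ≤ (1 + γ / lam) * ‖x - p‖ := by
        apply mul_le_mul_of_nonneg_right _ (norm_nonneg _)
        simpa [Real.norm_eq_abs] using habs
  calc ‖x - q‖ = ‖(x - p) + (p - q)‖ := by abel_nf
  _ ≤ ‖x - p‖ + ‖p - q‖ := norm_add_le _ _
  _ ≤ ‖x - p‖ + (1 + γ / lam) * ‖x - p‖ := by linarith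
  _ = (2 + γ / lam) * ‖x - p‖ := by ring
end

section
/- Let X be a real inner product space, ρ ∈ ℝ, and A : X → Set X a ρ-comonotone set-valued operator. For every γ > 0 with ρ > −γ and all x, p, q ∈ X, if γ⁻¹ • (x − p) ∈ A p and γ⁻¹ • (x − q) ∈ A q, then p = q (i.e. the resolvent J^A_γ is single-valued when ρ > −γ). -/
/-- For a `ρ`-comonotone operator on a real inner product space and
`γ > 0` with `ρ > −γ`, the resolvent `J^A_γ` is single-valued. -/
theorem resolvent_single_valued_of_comonotone
    {X : Type*} [NormedAddCommGroup X] [InnerProductSpace ℝ X]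
    (ρ : ℝ) (A : X → Set X)
    (hco : ∀ x y u v : X, u ∈ A x → v ∈ A y →
      ρ * ‖u - v‖ ^ 2 ≤ (inner ℝ (x - y) (u - v) : ℝ))
    (γ : ℝ) (hγ : 0 < γ) (hργ : -γ < ρ) (x p q : X)
    (hp : γ⁻¹ • (x - p) ∈ A p) (hq : γ⁻¹ • (x - q) ∈ A q) :
    p = q := by
  have h := hco p q _ _ hp hq
  have hdiff : γ⁻¹ • (x - p) - γ⁻¹ • (x - q) = γ⁻¹ • (q - p) := by
    rw [← smul_sub]; congr 1; abel
  rw [hdiff] at h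
  have hnorm : ‖γ⁻¹ • (q - p)‖ = γ⁻¹ * ‖q - p‖ := by
    rw [norm_smul, Real.norm_eq_abs, abs_of_pos (inv_pos.mpr hγ)]
  have hinner : (inner ℝ (p - q) (γ⁻¹ • (q - p)) : ℝ) = -(γ⁻¹ * ‖q - p‖ ^ 2) := by
    rw [real_inner_smul_right]
    have : (inner ℝ (p - q) (q - p) : ℝ) = -‖q - p‖ ^ 2 := by
      rw [show p - q = -(q - p) by abel, inner_neg_left, real_inner_self_eq_norm_sq]
    rw [this]; ring
  rw [hnorm, hinner] at h
  have hρ : ρ * (γ⁻¹ * ‖q - p‖) ^ 2 = (ρ * γ⁻¹ ^ 2) * ‖q - p‖ ^ 2 := by ring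
  have key : (ρ * γ⁻¹ ^ 2 + γ⁻¹) * ‖q - p‖ ^ 2 ≤ 0 := by nlinarith [h]
  have hpos : 0 < ρ * γ⁻¹ ^ 2 + γ⁻¹ := by
    have h1 : 0 < γ⁻¹ := inv_pos.mpr hγ
    have : ρ * γ⁻¹ ^ 2 + γ⁻¹ = (ρ + γ) * γ⁻¹ ^ 2 := by
      field_simp
    rw [this]
    exact mul_pos (by linarith) (pow_pos h1 2)
  have : ‖q - p‖ ^ 2 ≤ 0 := nonpos_of_mul_nonpos_right (by linarith [mul_comm (ρ * γ⁻¹ ^ 2 + γ⁻¹) (‖q - p‖ ^ 2)] ) hpos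
  have : ‖q - p‖ = 0 := by nlinarith [norm_nonneg (q - p)]
  have := norm_sub_eq_zero_iff.mp this
  exact this.symm
end

section
/- Let X be a real inner product space, ρ ∈ ℝ, and A : X → Set X a ρ-comonotone set-valued operator. For every γ > 0 with ρ > −γ, setting α = 1/(2(ρ/γ + 1)), for all x, y, p, q ∈ X with γ⁻¹ • (x − p) ∈ A p and γ⁻¹ • (y − q) ∈ A q one has 2α⟨p − q, (x − p) − (y − q)⟩ ≥ (1 − 2α)‖(x − p) − (y − q)‖² (i.e. the resolvent J^A_γ satisfies the inner-product form of α-conical nonexpansivity on its domain). -/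
/-- For a `ρ`-comonotone operator and `γ > 0` with `ρ > −γ`, the
resolvent satisfies the inner-product form of `α`-conical nonexpansivity with
`α = 1/(2(ρ/γ + 1))`. -/
theorem resolvent_conically_nonexpansive_of_comonotone
    {X : Type*} [NormedAddCommGroup X] [InnerProductSpace ℝ X]
    (ρ : ℝ) (A : X → Set X)
    (hco : ∀ x y u v : X, u ∈ A x → v ∈ A y →
      ρ * ‖u - v‖ ^ 2 ≤ (inner ℝ (x - y) (u - v) : ℝ))
    (γ : ℝ) (hγ : 0 < γ) (hργ : -γ < ρ) (x y p q : X)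
    (hp : γ⁻¹ • (x - p) ∈ A p) (hq : γ⁻¹ • (y - q) ∈ A q) :
    (1 - 2 * (1 / (2 * (ρ / γ + 1)))) * ‖(x - p) - (y - q)‖ ^ 2 ≤
      2 * (1 / (2 * (ρ / γ + 1))) * (inner ℝ (p - q) ((x - p) - (y - q)) : ℝ) := by
  have h := hco p q _ _ hp hq
  set w := (x - p) - (y - q) with hw
  have hsub : γ⁻¹ • (x - p) - γ⁻¹ • (y - q) = γ⁻¹ • w := by
    rw [hw, smul_sub]; module
  rw [hsub] at h
  have hγ0 : γ ≠ 0 := ne_of_gt hγ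
  have hnorm : ‖γ⁻¹ • w‖ ^ 2 = γ⁻¹ ^ 2 * ‖w‖ ^ 2 := by
    rw [norm_smul, mul_pow, norm_inv, Real.norm_eq_abs, abs_of_pos hγ]
  have hinner : (inner ℝ (p - q) (γ⁻¹ • w) : ℝ) = γ⁻¹ * inner ℝ (p - q) w := by
    rw [real_inner_smul_right]
  rw [hnorm, hinner] at h
  have key : (ρ / γ) * ‖w‖ ^ 2 ≤ (inner ℝ (p - q) w : ℝ) := by
    have := mul_le_mul_of_nonneg_left h (le_of_lt hγ)
    calc (ρ / γ) * ‖w‖ ^ 2 = γ * (ρ * (γ⁻¹ ^ 2 * ‖w‖ ^ 2)) := by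
          field_simp
      _ ≤ γ * (γ⁻¹ * inner ℝ (p - q) w) := this
      _ = inner ℝ (p - q) w := by field_simp
  have hpos : 0 < ρ / γ + 1 := by
    have : -1 < ρ / γ := by
      rw [lt_div_iff₀ hγ]; linarith
    linarith
  have hne : ρ / γ + 1 ≠ 0 := ne_of_gt hpos
  have h2 : (2 : ℝ) * (1 / (2 * (ρ / γ + 1))) = 1 / (ρ / γ + 1) := by
    field_simp
  rw [h2]
  have hl : (1 - 1 / (ρ / γ + 1)) * ‖w‖ ^ 2 = 1 / (ρ / γ + 1) * ((ρ / γ) * ‖w‖ ^ 2) := by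
    have hγρ : ρ + γ ≠ 0 := by linarith
    field_simp
    ring
  have hr : 1 / (ρ / γ + 1) * (inner ℝ (p - q) w : ℝ) = 1 / (ρ / γ + 1) * (inner ℝ (p - q) w : ℝ) := rfl
  rw [hl]
  exact mul_le_mul_of_nonneg_left key (by positivity)
end

section
/- Let X be a real inner product space, ρ ∈ ℝ, and A : X → Set X a ρ-comonotone set-valued operator. For every γ > 0 with ρ ≥ −γ/2 and all x, y, p, q ∈ X, if γ⁻¹ • (x − p) ∈ A p and γ⁻¹ • (y − q) ∈ A q, then ‖p − q‖ ≤ ‖x − y‖ (i.e. the resolvent J^A_γ is nonexpansive on its domain when ρ ≥ −γ/2). -/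
/-- For a `ρ`-comonotone operator and `γ > 0` with `ρ ≥ −γ/2`, the
resolvent `J^A_γ` is nonexpansive on its domain. -/
theorem resolvent_nonexpansive_of_comonotone
    {X : Type*} [NormedAddCommGroup X] [InnerProductSpace ℝ X]
    (ρ : ℝ) (A : X → Set X)
    (hco : ∀ x y u v : X, u ∈ A x → v ∈ A y →
      ρ * ‖u - v‖ ^ 2 ≤ (inner ℝ (x - y) (u - v) : ℝ))
    (γ : ℝ) (hγ : 0 < γ) (hργ : -γ / 2 ≤ ρ) (x y p q : X)
    (hp : γ⁻¹ • (x - p) ∈ A p) (hq : γ⁻¹ • (y - q) ∈ A q) :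
    ‖p - q‖ ≤ ‖x - y‖ := by
  have h := hco p q _ _ hp hq
  have hdiff : γ⁻¹ • (x - p) - γ⁻¹ • (y - q) = γ⁻¹ • ((x - y) - (p - q)) := by
    rw [← smul_sub]; congr 1; abel
  rw [hdiff] at h
  have hnorm : ‖γ⁻¹ • ((x - y) - (p - q))‖ = γ⁻¹ * ‖(x - y) - (p - q)‖ := by
    rw [norm_smul, Real.norm_eq_abs, abs_of_pos (inv_pos.mpr hγ)]
  rw [hnorm, real_inner_smul_right] at h
  have hexp : (inner ℝ (p - q) ((x - y) - (p - q)) : ℝ)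
      = inner ℝ (p - q) (x - y) - ‖p - q‖ ^ 2 := by
    rw [inner_sub_right, real_inner_self_eq_norm_sq]
  have hsq : ‖(x - y) - (p - q)‖ ^ 2
      = ‖x - y‖ ^ 2 - 2 * inner ℝ (x - y) (p - q) + ‖p - q‖ ^ 2 := by
    rw [← real_inner_self_eq_norm_sq, inner_sub_sub_self,
      real_inner_self_eq_norm_sq, real_inner_self_eq_norm_sq,
      real_inner_comm (p - q) (x - y)]
    ring
  rw [hexp] at h
  have hle : ‖p - q‖ ^ 2 ≤ ‖x - y‖ ^ 2 := by
    have hγ' : (0:ℝ) < γ⁻¹ := inv_pos.mpr hγ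
    have hsym : (inner ℝ (p - q) (x - y) : ℝ) = inner ℝ (x - y) (p - q) :=
      real_inner_comm _ _
    have h2 := mul_le_mul_of_nonneg_left h hγ.le
    have hinv : γ * γ⁻¹ = 1 := mul_inv_cancel₀ hγ.ne'
    have h3 : ρ * γ⁻¹ * ‖x - y - (p - q)‖ ^ 2
        ≤ inner ℝ (p - q) (x - y) - ‖p - q‖ ^ 2 := by
      have e1 : γ * (ρ * (γ⁻¹ * ‖x - y - (p - q)‖) ^ 2)
          = (γ * γ⁻¹) * (ρ * γ⁻¹ * ‖x - y - (p - q)‖ ^ 2) := by ring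
      have e2 : γ * (γ⁻¹ * (inner ℝ (p - q) (x - y) - ‖p - q‖ ^ 2))
          = (γ * γ⁻¹) * (inner ℝ (p - q) (x - y) - ‖p - q‖ ^ 2) := by ring
      rw [e1, e2, hinv, one_mul, one_mul] at h2
      exact h2
    have h4 : -(1/2 : ℝ) ≤ ρ * γ⁻¹ := by
      have := inv_mul_cancel₀ hγ.ne'
      nlinarith [mul_le_mul_of_nonneg_left hργ hγ'.le]
    have h5 := mul_le_mul_of_nonneg_right h4 (sq_nonneg ‖x - y - (p - q)‖)
    linarith
  nlinarith [norm_nonneg (p - q), norm_nonneg (x - y)]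
end

section
/- Let X be a real inner product space, ρ ∈ ℝ, and A : X → Set X a ρ-comonotone set-valued operator. For every γ > 0 with ρ ≥ −γ/2, setting α = 1/(2(ρ/γ + 1)), for all x, y, p, q ∈ X with γ⁻¹ • (x − p) ∈ A p and γ⁻¹ • (y − q) ∈ A q one has (1 − α)‖(x − p) − (y − q)‖² ≤ α(‖x − y‖² − ‖p − q‖²) (i.e. the resolvent J^A_γ satisfies the inner-product form of being α-averaged on its domain). -/
/-- For a `ρ`-comonotone operator and `γ > 0` with `ρ ≥ −γ/2`, the
resolvent satisfies the inner-product form of being `α`-averaged with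
`α = 1/(2(ρ/γ + 1))`. -/
theorem resolvent_averaged_of_comonotone
    {X : Type*} [NormedAddCommGroup X] [InnerProductSpace ℝ X]
    (ρ : ℝ) (A : X → Set X)
    (hco : ∀ x y u v : X, u ∈ A x → v ∈ A y →
      ρ * ‖u - v‖ ^ 2 ≤ (inner ℝ (x - y) (u - v) : ℝ))
    (γ : ℝ) (hγ : 0 < γ) (hργ : -γ / 2 ≤ ρ) (x y p q : X)
    (hp : γ⁻¹ • (x - p) ∈ A p) (hq : γ⁻¹ • (y - q) ∈ A q) :
    (1 - 1 / (2 * (ρ / γ + 1))) * ‖(x - p) - (y - q)‖ ^ 2 ≤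
      1 / (2 * (ρ / γ + 1)) * (‖x - y‖ ^ 2 - ‖p - q‖ ^ 2) := by
  have hco' := hco p q (γ⁻¹ • (x - p)) (γ⁻¹ • (y - q)) hp hq
  set w := (x - p) - (y - q) with hw
  have hsub : γ⁻¹ • (x - p) - γ⁻¹ • (y - q) = γ⁻¹ • w := by rw [hw, ← smul_sub]
  rw [hsub] at hco'
  have hγ' : (0:ℝ) < γ⁻¹ := inv_pos.mpr hγ
  have hnorm : ‖γ⁻¹ • w‖ = γ⁻¹ * ‖w‖ := by
    rw [norm_smul, Real.norm_eq_abs, abs_of_pos hγ']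
  have hinner : (inner ℝ (p - q) (γ⁻¹ • w) : ℝ) = γ⁻¹ * inner ℝ (p - q) w :=
    real_inner_smul_right _ _ _
  rw [hnorm, hinner] at hco'
  have hkey : (ρ / γ) * ‖w‖ ^ 2 ≤ (inner ℝ (p - q) w : ℝ) := by
    have h1 := mul_le_mul_of_nonneg_left hco' hγ.le
    have hγne : γ ≠ 0 := ne_of_gt hγ
    have e1 : γ * (ρ * (γ⁻¹ * ‖w‖) ^ 2) = (ρ / γ) * ‖w‖ ^ 2 := by
      field_simp
    have e2 : γ * (γ⁻¹ * (inner ℝ (p - q) w : ℝ)) = inner ℝ (p - q) w := by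
      field_simp
    rw [e1, e2] at h1
    exact h1
  have hexp : ‖x - y‖ ^ 2 = ‖p - q‖ ^ 2 + 2 * (inner ℝ (p - q) w : ℝ) + ‖w‖ ^ 2 := by
    have hxy : x - y = (p - q) + w := by rw [hw]; abel
    rw [hxy, norm_add_sq_real]
  have ht : (0:ℝ) < ρ / γ + 1 := by
    have : -(1/2 : ℝ) ≤ ρ / γ := by
      rw [le_div_iff₀ hγ]; nlinarith
    linarith
  rw [hexp]
  set s := ρ / γ with hs
  have hα : 1 / (2 * (s + 1)) * (2 * (s + 1)) = 1 := by
    field_simp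
  have hαpos : (0:ℝ) < 1 / (2 * (s + 1)) := by positivity
  nlinarith [mul_le_mul_of_nonneg_left hkey hαpos.le, sq_nonneg ‖w‖]
end

section
/- Let X be a real Hilbert space and A : X → Set X a monotone set-valued operator such that ran(Id + A) = X, i.e. for every x ∈ X there exists p ∈ X with x − p ∈ A p. Then A is maximally monotone: for all x, u ∈ X, if ⟨x − y, u − v⟩ ≥ 0 for all (y,v) ∈ gra A, then u ∈ A x. -/
/-- (One direction of Minty's theorem) A monotone operator on a real
Hilbert space with `ran(Id + A) = X` is maximally monotone. -/
theorem maximal_monotone_of_total_resolvent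
    {X : Type*} [NormedAddCommGroup X] [InnerProductSpace ℝ X] [CompleteSpace X]
    (A : X → Set X)
    (hmono : ∀ x y u v : X, u ∈ A x → v ∈ A y → (0 : ℝ) ≤ inner ℝ (x - y) (u - v))
    (hran : ∀ x : X, ∃ p : X, x - p ∈ A p) :
    ∀ x u : X, (∀ y v : X, v ∈ A y → (0 : ℝ) ≤ inner ℝ (x - y) (u - v)) → u ∈ A x := by
  intro x u hx
  obtain ⟨p, hp⟩ := hran (x + u)
  have h := hx p (x + u - p) hp
  have h2 : (inner ℝ (x - p) (u - (x + u - p)) : ℝ) = -‖x - p‖ ^ 2 := by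
    have : u - (x + u - p) = -(x - p) := by abel
    rw [this, inner_neg_right, real_inner_self_eq_norm_sq]
  have hxp : x = p := by
    have : ‖x - p‖ ^ 2 ≤ 0 := by nlinarith [h2 ▸ h]
    have := sq_nonneg ‖x - p‖
    have hn : ‖x - p‖ = 0 := by nlinarith
    rw [norm_eq_zero, sub_eq_zero] at hn
    exact hn
  have : x + u - p = u := by rw [← hxp]; abel
  rwa [hxp, ← this]
end
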